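/- (Irreducibility.) Let f be a Markov interval map and x ∈ E_f. If a bounded operator W on H_x commutes with T_i and with T_i* for every i ∈ {1,…,n}, then W is a scalar multiple of the identity. -/

import Mathlib

open scoped Classical ENNReal

noncomputable section

/-- Partition and branch data for a Markov interval map with `n` Markov
subintervals.  `cm j` is the point `c_j⁻` and `cp j` is `c_j⁺` (with
`cm 0 = cp 0 = c₀` and `cm n = cp n = c_n`).  `f` is the globally defined map,
`F j` is the branch of `f` on the `j`-th Markov interval (indexed by
`j = 0, …, n-1`, corresponding to the interval `I_{j+1}` of the paper) and
`F' j` is the derivative of that branch. -/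
structure MarkovSystem (n : ℕ) where
  cm : ℕ → ℝ
  cp : ℕ → ℝ
  f : ℝ → ℝ
  F : ℕ → ℝ → ℝ
  F' : ℕ → ℝ → ℝ
  two_le : 2 ≤ n
  cm_zero : cm 0 = cp 0
  cm_n : cm n = cp n
  cm_le_cp : ∀ j ≤ n, cm j ≤ cp j
  cp_lt_cm : ∀ j < n, cp j < cm (j + 1)

namespace MarkovSystem

variable {n : ℕ} (M : MarkovSystem n)

/-- The Markov interval `I_{j+1} = [c_j⁺, c_{j+1}⁻]` (for `j < n`). -/
def Ipart (j : ℕ) : Set ℝ := Set.Icc (M.cp j) (M.cm (j + 1))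

/-- The escape interval `E_j = (c_j⁻, c_j⁺)` (for `1 ≤ j ≤ n-1`). -/
def Epart (j : ℕ) : Set ℝ := Set.Ioo (M.cm j) (M.cp j)

/-- The ambient interval `I = [c₀, c_n]`. -/
def itv : Set ℝ := Set.Icc (M.cm 0) (M.cm n)

/-- The domain of `f`, namely `⋃_{j=1}^n I_j`. -/
def dom : Set ℝ := ⋃ j ∈ Finset.range n, M.Ipart j

/-- The set `Γ` of partition boundary points. -/
def Gamma : Set ℝ := {y | ∃ j ≤ n, y = M.cm j ∨ y = M.cp j}

/-- `q`-fold image of a set under `f`, applying `f` only where it is defined. -/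
def iterImage : ℕ → Set ℝ → Set ℝ
  | 0, S => S
  | q + 1, S => M.f '' (iterImage q S ∩ M.dom)

/-- `f^k(x)` is defined, i.e. all earlier iterates lie in the domain. -/
def definedUpTo (k : ℕ) (x : ℝ) : Prop := ∀ l < k, M.f^[l] x ∈ M.dom

/-- The orbit equivalence relation `R_f`. -/
def Rrel (x y : ℝ) : Prop :=
  ∃ p q : ℕ, M.definedUpTo p x ∧ M.definedUpTo q y ∧ M.f^[p] x = M.f^[q] y

/-- The generalized orbit `R_f(x)` of a point `x ∈ I`. -/
def Rclass (x : ℝ) : Set ℝ := {y | y ∈ M.itv ∧ M.Rrel x y}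

/-- The maximal invariant set `Ω_f`. -/
def Omega : Set ℝ := {x | x ∈ M.itv ∧ ∀ k, M.f^[k] x ∈ M.dom}

/-- The escape set `E_f = I \ Ω_f`. -/
def Esc : Set ℝ := M.itv \ M.Omega

/-- The regular set `Λ_f = Ω_f \ R_f(Γ)`. -/
def Lambda : Set ℝ := {x | x ∈ M.Omega ∧ ∀ γ ∈ M.Gamma, ¬ M.Rrel x γ}

/-- The escape time of a point of the escape set. -/
def tau (x : ℝ) : ℕ := sInf {k | M.f^[k] x ∉ M.dom}

/-- The final escape point `e(x) = f^{τ(x)}(x)`. -/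
def e (x : ℝ) : ℝ := M.f^[M.tau x] x

/-- The transition-matrix condition `a_{ij} = 1`, i.e. `f(int I_i) ⊇ int I_j`. -/
def trans (i j : ℕ) : Prop := interior (M.Ipart j) ⊆ M.F i '' interior (M.Ipart i)

/-- The escape-transition condition `â_{ik} = 1`, i.e. `int I_i ∩ f⁻¹(E_k) ≠ ∅`. -/
def ahat (i k : ℕ) : Prop := (interior (M.Ipart i) ∩ M.F i ⁻¹' M.Epart k).Nonempty

end MarkovSystem

/-- The defining properties (P1)-(P4) of a Markov interval map, together with the
compatibility of the global map `f` with the branches `F j`:  `f` agrees with `F j`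
on `I_j` except possibly at a boundary point shared with an adjacent interval,
where `f` is given by one of the two adjacent branches. -/
structure IsMarkov {n : ℕ} (M : MarkovSystem n) : Prop where
  compat₁ : ∀ j < n, ∀ x ∈ M.Ipart j, (∀ k < n, k ≠ j → x ∉ M.Ipart k) → M.f x = M.F j x
  compat₂ : ∀ x ∈ M.dom, ∃ j, j < n ∧ x ∈ M.Ipart j ∧ M.f x = M.F j x
  maps_into : ∀ j < n, M.F j '' M.Ipart j ⊆ M.itv
  onto : M.itv ⊆ ⋃ j ∈ Finset.range n, M.F j '' M.Ipart j
  markov : ∀ i < n, ∃ S T : Set ℕ, S ⊆ {j | j < n} ∧ T ⊆ {j | 1 ≤ j ∧ j < n} ∧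
    M.F i '' M.Ipart i = (⋃ j ∈ S, M.Ipart j) ∪ (⋃ j ∈ T, M.Epart j)
  deriv : ∀ i < n, ∀ x ∈ M.Ipart i, HasDerivWithinAt (M.F i) (M.F' i x) (M.Ipart i) x
  derivCont : ∀ i < n, ContinuousOn (M.F' i) (M.Ipart i)
  mono : ∀ i < n, StrictMonoOn (M.F i) (M.Ipart i) ∨ StrictAntiOn (M.F i) (M.Ipart i)
  expansive : ∃ b > 1, ∀ i < n, ∀ x ∈ M.Ipart i, b < |M.F' i x|
  aperiodic : ∀ i < n, ∃ q, M.dom ⊆ M.iterImage q (M.Ipart i)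

namespace MarkovSystem

variable {n : ℕ} (M : MarkovSystem n)

/-- The Hilbert space `H_x = ℓ²(R_f(x))`. -/
abbrev Hsp (x : ℝ) : Type _ := lp (fun _ : M.Rclass x => ℂ) 2

/-- The canonical orthonormal basis vector `δ_z` of `H_x`, for `z ∈ R_f(x)`. -/
def dvec {x : ℝ} (z : M.Rclass x) : M.Hsp x := lp.single 2 z 1

/-- `T` is the bounded operator `T_i` on `H_x`, determined on the basis by
`T_i δ_y = δ_{(f|_{I_i})⁻¹(y)}` if `y ∈ f(I_i)` and `T_i δ_y = 0` otherwise. -/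
def IsBranchOp (x : ℝ) (i : ℕ) (T : M.Hsp x →L[ℂ] M.Hsp x) : Prop :=
  (∀ z w : M.Rclass x, (w : ℝ) ∈ M.Ipart i → M.F i w = (z : ℝ) →
      T (M.dvec z) = M.dvec w) ∧
  (∀ z : M.Rclass x, (z : ℝ) ∉ M.F i '' M.Ipart i → T (M.dvec z) = 0)

/-- `Pe` is the rank-one orthogonal projection onto `ℂ δ_{e(x)}`. -/
def IsEscProj (x : ℝ) (Pe : M.Hsp x →L[ℂ] M.Hsp x) : Prop :=
  ∀ z : M.Rclass x, Pe (M.dvec z) = if (z : ℝ) = M.e x then M.dvec z else 0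

end MarkovSystem

/-!
The escape point `e = e(x)` is the only point of `R_f(x)` outside `dom f`, and every other
point `z` of the class is recovered from `f z` by a branch: `δ_z = T_j δ_{f z}`.
Since `e ∉ dom f`, no `T_i δ_u` equals `δ_e`, so every `T_i*` kills `δ_e`; hence for `z ≠ e`,
`⟪δ_z, W δ_e⟫ = ⟪δ_{f z}, T_j* W δ_e⟫ = ⟪δ_{f z}, W T_j* δ_e⟫ = 0`, so `W δ_e = c δ_e`.
Induction along the finite forward orbit `z, f z, …, e` then gives
`W δ_z = W T_j δ_{f z} = T_j W δ_{f z} = c δ_z` for all `z`.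

The only subtle point is that a branch preimage `m` of a point of `R_f(x)` lies again in
`R_f(x)`: this fails only if `m` is shared by two Markov intervals, but then `m` is a
partition point, its image is an endpoint of a Markov image and hence again a partition point,
and partition points never escape.
-/

lemma lp.eq_smul_one_of_forall_single {ι 𝕜 : Type*} [NormedField 𝕜] [DecidableEq ι]
    {p : ℝ≥0∞} [Fact (1 ≤ p)] (hp : p ≠ ⊤)
    {W : lp (fun _ : ι => 𝕜) p →L[𝕜] lp (fun _ : ι => 𝕜) p} {c : 𝕜}
    (hW : ∀ i, W (lp.single p i 1) = c • lp.single p i 1) : W = c • 1 := by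
  refine lp.ext_continuousLinearMap hp fun i => ContinuousLinearMap.ext_ring ?_
  simpa using hW i

namespace MarkovSystem

variable {n : ℕ}

section Partition

variable (M : MarkovSystem n)

lemma cp_le_cp {a b : ℕ} (hab : a ≤ b) (hb : b ≤ n) : M.cp a ≤ M.cp b := by
  induction b, hab using Nat.le_induction with
  | base => rfl
  | succ b _ ih =>
    exact (ih (by omega)).trans <|
      (M.cp_lt_cm b (by omega)).le.trans (M.cm_le_cp (b + 1) hb)

lemma cm_le_cm {a b : ℕ} (hab : a ≤ b) (hb : b ≤ n) : M.cm a ≤ M.cm b := by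
  induction b, hab using Nat.le_induction with
  | base => rfl
  | succ b _ ih =>
    exact (ih (by omega)).trans <|
      (M.cm_le_cp b (by omega)).trans (M.cp_lt_cm b (by omega)).le

lemma cm_le_cp_of_le {a b : ℕ} (hab : a ≤ b) (hb : b ≤ n) : M.cm a ≤ M.cp b :=
  (M.cm_le_cm hab hb).trans (M.cm_le_cp b hb)

lemma cp_mem_Ipart {j : ℕ} (hj : j < n) : M.cp j ∈ M.Ipart j :=
  ⟨le_rfl, (M.cp_lt_cm j hj).le⟩

lemma cm_succ_mem_Ipart {j : ℕ} (hj : j < n) : M.cm (j + 1) ∈ M.Ipart j :=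
  ⟨(M.cp_lt_cm j hj).le, le_rfl⟩

lemma mem_dom_of_mem_Ipart {j : ℕ} (hj : j < n) {y : ℝ} (hy : y ∈ M.Ipart j) : y ∈ M.dom :=
  Set.mem_biUnion (Finset.mem_coe.2 (Finset.mem_range.2 hj)) hy

lemma Ipart_subset_itv {j : ℕ} (hj : j < n) : M.Ipart j ⊆ M.itv := fun _ hy =>
  ⟨M.cm_zero ▸ (M.cp_le_cp j.zero_le hj.le).trans hy.1, hy.2.trans (M.cm_le_cm hj le_rfl)⟩

lemma dom_subset_itv : M.dom ⊆ M.itv := by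
  simp only [dom, Finset.mem_range, Set.iUnion_subset_iff]
  exact fun j hj => M.Ipart_subset_itv hj

lemma Gamma_subset_dom : M.Gamma ⊆ M.dom := by
  have two_le := M.two_le
  have cm_mem_dom : ∀ j ≤ n, M.cm j ∈ M.dom := by
    rintro (_ | j) hj
    · exact M.mem_dom_of_mem_Ipart (by omega) (M.cm_zero ▸ M.cp_mem_Ipart (by omega))
    · exact M.mem_dom_of_mem_Ipart (by omega) (M.cm_succ_mem_Ipart (by omega))
  rintro y ⟨j, hj, rfl | rfl⟩
  · exact cm_mem_dom j hj
  · rcases hj.lt_or_eq with hj | rfl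
    · exact M.mem_dom_of_mem_Ipart hj (M.cp_mem_Ipart hj)
    · exact M.cm_n ▸ cm_mem_dom j le_rfl

lemma mem_Gamma_of_mem_Ipart_of_mem_Ipart {i k : ℕ} (hi : i < n) (hk : k < n) (hki : k ≠ i)
    {y : ℝ} (hyi : y ∈ M.Ipart i) (hyk : y ∈ M.Ipart k) : y ∈ M.Gamma := by
  rcases hki.lt_or_gt with hki | hik
  · refine ⟨i, hi.le, Or.inr (le_antisymm ?_ hyi.1)⟩
    exact hyk.2.trans (M.cm_le_cp_of_le hki hi.le)
  · refine ⟨i + 1, hi, Or.inl (le_antisymm hyi.2 ?_)⟩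
    exact (M.cm_le_cp_of_le hik hk.le).trans hyk.1

lemma eq_cp_or_eq_cm_of_mem_Gamma {i : ℕ} (hi : i < n) {y : ℝ} (hyG : y ∈ M.Gamma)
    (hy : y ∈ M.Ipart i) : y = M.cp i ∨ y = M.cm (i + 1) := by
  obtain ⟨j, hj, hyj⟩ := hyG
  have hcm : M.cm j ≤ y := by rcases hyj with rfl | rfl <;> simp [M.cm_le_cp j hj]
  have hcp : y ≤ M.cp j := by rcases hyj with rfl | rfl <;> simp [M.cm_le_cp j hj]
  rcases le_or_gt j i with hji | hij
  · exact Or.inl (le_antisymm (hcp.trans (M.cp_le_cp hji hi.le)) hy.1)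
  · exact Or.inr (le_antisymm hy.2 ((M.cm_le_cm hij hj).trans hcm))

end Partition

section Gamma

variable (M : MarkovSystem n)

lemma mem_Gamma_of_isLeast {S T : Set ℕ} (hS : S ⊆ {j | j < n}) {y : ℝ}
    (hy : IsLeast ((⋃ j ∈ S, M.Ipart j) ∪ (⋃ j ∈ T, M.Epart j)) y) : y ∈ M.Gamma := by
  rcases hy.1 with hyI | hyE
  · obtain ⟨s, hs, hys⟩ := Set.mem_iUnion₂.1 hyI
    have hcp : M.cp s ∈ (⋃ j ∈ S, M.Ipart j) ∪ (⋃ j ∈ T, M.Epart j) :=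
      Or.inl (Set.mem_biUnion hs (M.cp_mem_Ipart (hS hs)))
    exact ⟨s, (hS hs).le, Or.inr (le_antisymm (hy.2 hcp) hys.1)⟩
  · obtain ⟨t, ht, hyt⟩ := Set.mem_iUnion₂.1 hyE
    obtain ⟨u, htu, huy⟩ := exists_between hyt.1
    exact absurd (hy.2 (Or.inr (Set.mem_biUnion ht ⟨htu, huy.trans hyt.2⟩))) huy.not_ge

lemma mem_Gamma_of_isGreatest {S T : Set ℕ} (hS : S ⊆ {j | j < n}) {y : ℝ}
    (hy : IsGreatest ((⋃ j ∈ S, M.Ipart j) ∪ (⋃ j ∈ T, M.Epart j)) y) : y ∈ M.Gamma := by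
  rcases hy.1 with hyI | hyE
  · obtain ⟨s, hs, hys⟩ := Set.mem_iUnion₂.1 hyI
    have hcm : M.cm (s + 1) ∈ (⋃ j ∈ S, M.Ipart j) ∪ (⋃ j ∈ T, M.Epart j) :=
      Or.inl (Set.mem_biUnion hs (M.cm_succ_mem_Ipart (hS hs)))
    exact ⟨s + 1, hS hs, Or.inl (le_antisymm hys.2 (hy.2 hcm))⟩
  · obtain ⟨t, ht, hyt⟩ := Set.mem_iUnion₂.1 hyE
    obtain ⟨u, hyu, hut⟩ := exists_between hyt.2
    exact absurd (hy.2 (Or.inr (Set.mem_biUnion ht ⟨hyt.1.trans hyu, hut⟩))) hyu.not_ge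

variable {M}

lemma isLeast_or_isGreatest_image_of_mem_Gamma (hM : IsMarkov M) {i : ℕ} (hi : i < n) {y : ℝ}
    (hy : y ∈ M.Ipart i) (hyG : y ∈ M.Gamma) :
    IsLeast (M.F i '' M.Ipart i) (M.F i y) ∨ IsGreatest (M.F i '' M.Ipart i) (M.F i y) := by
  have hle : M.cp i ≤ M.cm (i + 1) := (M.cp_lt_cm i hi).le
  rcases M.eq_cp_or_eq_cm_of_mem_Gamma hi hyG hy with rfl | rfl <;>
    rcases hM.mono i hi with hmono | hanti
  · exact Or.inl (hmono.monotoneOn.map_isLeast (isLeast_Icc hle))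
  · exact Or.inr (hanti.antitoneOn.map_isLeast (isLeast_Icc hle))
  · exact Or.inr (hmono.monotoneOn.map_isGreatest (isGreatest_Icc hle))
  · exact Or.inl (hanti.antitoneOn.map_isGreatest (isGreatest_Icc hle))

lemma F_mem_Gamma (hM : IsMarkov M) {i : ℕ} (hi : i < n) {y : ℝ} (hy : y ∈ M.Ipart i)
    (hyG : y ∈ M.Gamma) : M.F i y ∈ M.Gamma := by
  obtain ⟨S, T, hS, -, himage⟩ := hM.markov i hi
  rcases isLeast_or_isGreatest_image_of_mem_Gamma hM hi hy hyG with h | h <;>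
    rw [himage] at h
  · exact M.mem_Gamma_of_isLeast hS h
  · exact M.mem_Gamma_of_isGreatest hS h

lemma mapsTo_f_Gamma (hM : IsMarkov M) : Set.MapsTo M.f M.Gamma M.Gamma := fun y hyG => by
  obtain ⟨j, hj, hyj, hfy⟩ := hM.compat₂ y (M.Gamma_subset_dom hyG)
  exact hfy ▸ F_mem_Gamma hM hj hyj hyG

lemma iterate_mem_dom_of_mem_Gamma (hM : IsMarkov M) {y : ℝ} (hyG : y ∈ M.Gamma) (k : ℕ) :
    M.f^[k] y ∈ M.dom :=
  M.Gamma_subset_dom ((mapsTo_f_Gamma hM).iterate k hyG)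

end Gamma

section OrbitClass

variable {M : MarkovSystem n}

lemma f_mem_itv (hM : IsMarkov M) {y : ℝ} (hy : y ∈ M.dom) : M.f y ∈ M.itv := by
  obtain ⟨j, hj, hyj, hfy⟩ := hM.compat₂ y hy
  exact hfy ▸ hM.maps_into j hj ⟨y, hyj, rfl⟩

lemma definedUpTo_succ_left {k : ℕ} {y : ℝ} :
    M.definedUpTo (k + 1) y ↔ y ∈ M.dom ∧ M.definedUpTo k (M.f y) := by
  simp only [definedUpTo, Nat.forall_lt_succ_left, Function.iterate_zero_apply,
    Function.iterate_succ_apply]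

lemma definedUpTo_succ_right {k : ℕ} {y : ℝ} :
    M.definedUpTo (k + 1) y ↔ M.definedUpTo k y ∧ M.f^[k] y ∈ M.dom :=
  Nat.forall_lt_succ_right

lemma iterate_mem_itv (hM : IsMarkov M) {k : ℕ} {y : ℝ} (hy : y ∈ M.itv)
    (hk : M.definedUpTo k y) : M.f^[k] y ∈ M.itv := by
  induction k with
  | zero => exact hy
  | succ k ih =>
    rw [definedUpTo_succ_right] at hk
    rw [Function.iterate_succ_apply']
    exact f_mem_itv hM hk.2

lemma Rrel_f_right_iff {x y : ℝ} (hy : y ∈ M.dom) : M.Rrel x (M.f y) ↔ M.Rrel x y := by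
  constructor
  · rintro ⟨p, q, hp, hq, hpq⟩
    exact ⟨p, q + 1, hp, definedUpTo_succ_left.2 ⟨hy, hq⟩, hpq⟩
  · rintro ⟨p, _ | q, hp, hq, hpq⟩
    · refine ⟨p + 1, 0, definedUpTo_succ_right.2 ⟨hp, hpq ▸ hy⟩,
        fun _ h => absurd h (Nat.not_lt_zero _), ?_⟩
      rw [Function.iterate_succ_apply', hpq, Function.iterate_zero_apply,
        Function.iterate_zero_apply]
    · exact ⟨p, q, hp, (definedUpTo_succ_left.1 hq).2, hpq⟩

lemma f_mem_Rclass_iff (hM : IsMarkov M) {x y : ℝ} (hy : y ∈ M.dom) :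
    M.f y ∈ M.Rclass x ↔ y ∈ M.Rclass x := by
  simp only [Rclass, Set.mem_ofPred_eq, Rrel_f_right_iff hy, f_mem_itv hM hy,
    M.dom_subset_itv hy, true_and]

lemma definedUpTo_tau (y : ℝ) : M.definedUpTo (M.tau y) y := fun _ hl =>
  not_not.1 (Nat.notMem_of_lt_sInf hl)

lemma tau_eq_of_definedUpTo {p : ℕ} {y : ℝ} (hp : M.definedUpTo p y)
    (hpy : M.f^[p] y ∉ M.dom) : M.tau y = p := by
  refine le_antisymm (Nat.sInf_le hpy) (not_lt.1 fun hlt => ?_)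
  exact (Nat.sInf_mem (s := {k | M.f^[k] y ∉ M.dom}) ⟨p, hpy⟩) (hp _ hlt)

lemma exists_iterate_notMem_dom {x : ℝ} (hx : x ∈ M.Esc) : ∃ k, M.f^[k] x ∉ M.dom := by
  by_contra! h
  exact hx.2 ⟨hx.1, h⟩

lemma e_notMem_dom {x : ℝ} (hx : x ∈ M.Esc) : M.e x ∉ M.dom :=
  Nat.sInf_mem (exists_iterate_notMem_dom hx)

lemma e_mem_Rclass (hM : IsMarkov M) {x : ℝ} (hx : x ∈ M.Esc) : M.e x ∈ M.Rclass x :=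
  ⟨iterate_mem_itv hM hx.1 (definedUpTo_tau x),
    M.tau x, 0, definedUpTo_tau x, fun _ h => absurd h (Nat.not_lt_zero _), rfl⟩

lemma eq_e_of_notMem_dom {x y : ℝ} (hy : y ∈ M.Rclass x) (hyd : y ∉ M.dom) : y = M.e x := by
  obtain ⟨-, p, _ | q, hp, hq, hpq⟩ := hy
  · rw [Function.iterate_zero_apply] at hpq
    rw [e, tau_eq_of_definedUpTo hp (hpq ▸ hyd), hpq]
  · exact absurd (definedUpTo_succ_left.1 hq).1 hyd

lemma exists_iterate_notMem_dom_of_mem_Rclass {x y : ℝ} (hx : x ∈ M.Esc)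
    (hy : y ∈ M.Rclass x) : ∃ k, M.f^[k] y ∉ M.dom := by
  obtain ⟨-, p, q, hp, -, hpq⟩ := hy
  have hpτ : p ≤ M.tau x := not_lt.1 fun hlt => e_notMem_dom hx (hp _ hlt)
  refine ⟨M.tau x - p + q, ?_⟩
  rw [Function.iterate_add_apply, ← hpq, ← Function.iterate_add_apply, Nat.sub_add_cancel hpτ]
  exact e_notMem_dom hx

theorem Rclass_induction (hM : IsMarkov M) {x : ℝ} (hx : x ∈ M.Esc) {P : ℝ → Prop}
    (he : P (M.e x)) (hstep : ∀ z ∈ M.Rclass x, z ∈ M.dom → P (M.f z) → P z) :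
    ∀ z ∈ M.Rclass x, P z := by
  suffices ∀ k, ∀ z ∈ M.Rclass x, M.f^[k] z ∉ M.dom → P z from fun z hz =>
    (exists_iterate_notMem_dom_of_mem_Rclass hx hz).elim fun k hk => this k z hz hk
  intro k
  induction k with
  | zero => exact fun z hz hzd => eq_e_of_notMem_dom hz hzd ▸ he
  | succ k ih =>
    intro z hz hk
    by_cases hzd : z ∈ M.dom
    · exact hstep z hz hzd (ih _ ((f_mem_Rclass_iff hM hzd).2 hz) hk)
    · exact eq_e_of_notMem_dom hz hzd ▸ he

lemma mem_Rclass_of_F_mem (hM : IsMarkov M) {x : ℝ} (hx : x ∈ M.Esc) {i : ℕ} (hi : i < n)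
    {m : ℝ} (hm : m ∈ M.Ipart i) (hFm : M.F i m ∈ M.Rclass x) : m ∈ M.Rclass x := by
  by_cases hshared : ∃ k < n, k ≠ i ∧ m ∈ M.Ipart k
  · obtain ⟨k, hk, hki, hmk⟩ := hshared
    have hFmG := F_mem_Gamma hM hi hm (M.mem_Gamma_of_mem_Ipart_of_mem_Ipart hi hk hki hm hmk)
    obtain ⟨l, hl⟩ := exists_iterate_notMem_dom_of_mem_Rclass hx hFm
    exact absurd (iterate_mem_dom_of_mem_Gamma hM hFmG l) hl
  · push Not at hshared
    have hmd := M.mem_dom_of_mem_Ipart hi hm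
    rw [← f_mem_Rclass_iff hM hmd, hM.compat₁ i hi m hm hshared]
    exact hFm

end OrbitClass

section BranchOperators

variable {M : MarkovSystem n} {x : ℝ}

lemma inner_dvec_left (z : M.Rclass x) (v : M.Hsp x) : inner ℂ (M.dvec z) v = v z := by
  simp [dvec, lp.inner_single_left]

lemma dvec_apply_ne {z w : M.Rclass x} (hwz : w ≠ z) : M.dvec z w = 0 :=
  lp.single_apply_ne 2 z 1 hwz

variable (hM : IsMarkov M) {T : ℕ → (M.Hsp x →L[ℂ] M.Hsp x)}
  (hT : ∀ i < n, M.IsBranchOp x i (T i))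
include hM hT

lemma exists_branchOp_apply_dvec_f (z : M.Rclass x) (hz : (z : ℝ) ∈ M.dom) :
    ∃ j < n, T j (M.dvec ⟨M.f z, (f_mem_Rclass_iff hM hz).2 z.2⟩) = M.dvec z := by
  obtain ⟨j, hj, hzj, hfz⟩ := hM.compat₂ z hz
  exact ⟨j, hj, (hT j hj).1 _ z hzj hfz.symm⟩

variable (hx : x ∈ M.Esc)
include hx

lemma adjoint_branchOp_apply_dvec_of_notMem_dom {i : ℕ} (hi : i < n) {z₀ : M.Rclass x}
    (hz₀ : (z₀ : ℝ) ∉ M.dom) : star (T i) (M.dvec z₀) = 0 := by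
  ext u
  rw [← inner_dvec_left, ContinuousLinearMap.star_eq_adjoint,
    ContinuousLinearMap.adjoint_inner_right]
  by_cases hu : (u : ℝ) ∈ M.F i '' M.Ipart i
  · obtain ⟨m, hm, hmu⟩ := hu
    have hmC : m ∈ M.Rclass x := mem_Rclass_of_F_mem hM hx hi hm (hmu ▸ u.2)
    have hmz₀ : (⟨m, hmC⟩ : M.Rclass x) ≠ z₀ := fun h =>
      hz₀ (h ▸ M.mem_dom_of_mem_Ipart hi hm)
    rw [(hT i hi).1 u ⟨m, hmC⟩ hm hmu, inner_dvec_left, dvec_apply_ne hmz₀]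
    rfl
  · rw [(hT i hi).2 u hu, inner_zero_left]
    rfl

lemma exists_apply_dvec_eq_smul_of_notMem_dom {V : M.Hsp x →L[ℂ] M.Hsp x}
    (hV : ∀ i < n, Commute V (star (T i))) {z₀ : M.Rclass x} (hz₀ : (z₀ : ℝ) ∉ M.dom) :
    ∃ c : ℂ, V (M.dvec z₀) = c • M.dvec z₀ := by
  refine ⟨V (M.dvec z₀) z₀, ?_⟩
  ext z
  by_cases hz : z = z₀
  · subst hz
    simp [dvec]
  have hzd : (z : ℝ) ∈ M.dom := by
    by_contra hzd
    exact hz (Subtype.ext ((eq_e_of_notMem_dom z.2 hzd).trans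
      (eq_e_of_notMem_dom z₀.2 hz₀).symm))
  obtain ⟨j, hj, hTj⟩ := exists_branchOp_apply_dvec_f hM hT z hzd
  calc V (M.dvec z₀) z
      = inner ℂ (T j (M.dvec ⟨M.f z, _⟩)) (V (M.dvec z₀)) := by rw [hTj, inner_dvec_left]
    _ = inner ℂ (M.dvec ⟨M.f z, _⟩) (V (star (T j) (M.dvec z₀))) := by
        rw [← ContinuousLinearMap.adjoint_inner_right, ← ContinuousLinearMap.star_eq_adjoint]
        exact congrArg _ (DFunLike.congr_fun (hV j hj).eq _).symm
    _ = (V (M.dvec z₀) z₀ • M.dvec z₀) z := by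
        rw [adjoint_branchOp_apply_dvec_of_notMem_dom hM hT hx hj hz₀, map_zero,
          inner_zero_right, lp.coeFn_smul, Pi.smul_apply, dvec_apply_ne hz, smul_zero]

lemma exists_forall_apply_dvec_eq_smul {V : M.Hsp x →L[ℂ] M.Hsp x}
    (hVT : ∀ i < n, Commute V (T i)) (hVT' : ∀ i < n, Commute V (star (T i))) :
    ∃ c : ℂ, ∀ z : M.Rclass x, V (M.dvec z) = c • M.dvec z := by
  obtain ⟨c, hc⟩ := exists_apply_dvec_eq_smul_of_notMem_dom hM hT hx hVT'
    (z₀ := ⟨M.e x, e_mem_Rclass hM hx⟩) (e_notMem_dom hx)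
  refine ⟨c, fun z => Rclass_induction hM hx
    (P := fun y => ∀ hy : y ∈ M.Rclass x, V (M.dvec ⟨y, hy⟩) = c • M.dvec ⟨y, hy⟩)
    (fun _ => hc) (fun y hy hyd ih _ => ?_) z z.2 z.2⟩
  obtain ⟨j, hj, hTj⟩ := exists_branchOp_apply_dvec_f hM hT ⟨y, hy⟩ hyd
  calc V (M.dvec ⟨y, _⟩) = T j (V (M.dvec ⟨M.f y, _⟩)) := by
        rw [← hTj]
        exact DFunLike.congr_fun (hVT j hj).eq _
    _ = c • M.dvec ⟨y, _⟩ := by rw [ih, map_smul, hTj]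

end BranchOperators

end MarkovSystem

/-- Irreducibility: any bounded operator on `H_x` commuting with all `T_i` and
`T_i*` is a scalar multiple of the identity. -/
theorem representation_irreducible {n : ℕ} (M : MarkovSystem n) (hM : IsMarkov M)
    {x : ℝ} (hx : x ∈ M.Esc)
    (T : ℕ → (M.Hsp x →L[ℂ] M.Hsp x)) (hT : ∀ i < n, M.IsBranchOp x i (T i))
    (W : M.Hsp x →L[ℂ] M.Hsp x)
    (hW : ∀ i < n, W * T i = T i * W ∧ W * star (T i) = star (T i) * W) :
    ∃ c : ℂ, W = c • (1 : M.Hsp x →L[ℂ] M.Hsp x) := by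
  obtain ⟨c, hc⟩ := MarkovSystem.exists_forall_apply_dvec_eq_smul hM hT hx
    (fun i hi => (hW i hi).1) (fun i hi => (hW i hi).2)
  exact ⟨c, lp.eq_smul_one_of_forall_single ENNReal.ofNat_ne_top hc⟩
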